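/- arXiv:math/0004099 — 4 statements merged into one kernel-verified Lean document; each statement's English description precedes it below -/
import Mathlib

section
/- Let b and b* be integers with b·b* ≡ 1 (mod r), let β ∈ ℤ^ℓ, and let ξ ∈ ℂ satisfy ξ^r = 1. Then ∑_{k ∈ {0,…,r−1}^ℓ} ξ^{b(B(ρ+k,ρ+k) − B(ρ,ρ))/2 + B(ρ+k, β)} = ξ^{−b*·B(β,β)/2} · γ_b(ξ). -/
/-- Cast an integer vector to a rational vector. -/
def intVecQ {l : ℕ} (x : Fin l → ℤ) : Fin l → ℚ := fun i => (x i : ℚ)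

/-- Cast a vector of residues `k ∈ {0,…,r−1}^l` to a rational vector. -/
def finVecQ {l r : ℕ} (k : Fin l → Fin r) : Fin l → ℚ := fun i => ((k i : ℕ) : ℚ)

/-- completing the square for the Gauss sum
`∑_{k ∈ {0,…,r−1}^ℓ} ξ^{b(B(ρ+k,ρ+k) − B(ρ,ρ))/2 + B(ρ+k, β)} = ξ^{−b*·B(β,β)/2} · γ_b(ξ)`. -/
theorem stmt1 (l r : ℕ) (hl : 0 < l) (hr : 0 < r)
    (B : (Fin l → ℚ) →ₗ[ℚ] (Fin l → ℚ) →ₗ[ℚ] ℚ)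
    (hBsymm : ∀ x y, B x y = B y x)
    (hBint : ∀ x y : Fin l → ℤ, ∃ n : ℤ, (n : ℚ) = B (intVecQ x) (intVecQ y))
    (hBeven : ∀ y : Fin l → ℤ, ∃ n : ℤ, ((2 * n : ℤ) : ℚ) = B (intVecQ y) (intVecQ y))
    (ρ : Fin l → ℚ)
    (hρ : ∀ y : Fin l → ℤ, ∃ n : ℤ, (n : ℚ) = B ρ (intVecQ y))
    (ξ : ℂ) (hξ : ξ ^ r = 1)
    (b bs : ℤ) (hbbs : b * bs ≡ 1 [ZMOD (r : ℤ)])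
    (β : Fin l → ℤ)
    (e g : (Fin l → Fin r) → ℤ)
    (he : ∀ k : Fin l → Fin r, ((e k : ℤ) : ℚ) =
      (b : ℚ) * (B (ρ + finVecQ k) (ρ + finVecQ k) - B ρ ρ) / 2
        + B (ρ + finVecQ k) (intVecQ β))
    (hg : ∀ k : Fin l → Fin r, ((g k : ℤ) : ℚ) =
      (b : ℚ) * (B (ρ + finVecQ k) (ρ + finVecQ k) - B ρ ρ) / 2)
    (c : ℤ) (hc : ((c : ℤ) : ℚ) = (bs : ℚ) * B (intVecQ β) (intVecQ β) / 2) :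
    ∑ k : Fin l → Fin r, ξ ^ (e k) =
      ξ ^ (-c) * ∑ k : Fin l → Fin r, ξ ^ (g k) := by
  haveI : NeZero r := ⟨hr.ne'⟩
  have hξ0 : ξ ≠ 0 := by
    intro h; rw [h, zero_pow hr.ne'] at hξ; exact one_ne_zero hξ.symm
  have hper : ∀ a a' : ℤ, (r:ℤ) ∣ a' - a → ξ ^ a = ξ ^ a' := by
    rintro a a' ⟨t, ht⟩
    have ha : a' = a + r * t := by linarith
    rw [ha, zpow_add₀ hξ0, zpow_mul, zpow_natCast, hξ, one_zpow, mul_one]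
  have hrZ : (0:ℤ) < (r:ℤ) := by exact_mod_cast hr
  -- the shift vector
  have hvlt : ∀ i : Fin l, ((bs * β i) % r).toNat < r := by
    intro i
    have h1 := Int.emod_nonneg (bs * β i) hrZ.ne'
    have h2 := Int.emod_lt_of_pos (bs * β i) hrZ
    omega
  set v : Fin l → Fin r := fun i => ⟨((bs * β i) % r).toNat, hvlt i⟩ with hv
  set σ : (Fin l → Fin r) ≃ (Fin l → Fin r) := Equiv.addRight v with hσ
  have hd : ∀ (k : Fin l → Fin r) (i : Fin l),
      (r:ℤ) ∣ ((((σ k) i : ℕ) : ℤ) - ((k i : ℕ) : ℤ) - bs * β i) := by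
    intro k i
    have h1 : (σ k) i = k i + v i := rfl
    have h2 : (((σ k) i : ℕ) : ℤ) = (((k i : ℕ) : ℤ) + (bs * β i) % r) % r := by
      rw [h1]
      have h3 : ((v i : ℕ) : ℤ) = (bs * β i) % r :=
        Int.toNat_of_nonneg (Int.emod_nonneg _ hrZ.ne')
      rw [Fin.val_add]
      push_cast
      rw [h3]
    have e1 : ((((k i : ℕ) : ℤ) + (bs * β i) % r) % r) ≡ (((k i : ℕ) : ℤ) + (bs * β i) % r) [ZMOD (r:ℤ)] :=
      Int.emod_emod_of_dvd _ dvd_rfl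
    have e2 : (bs * β i) % (r:ℤ) ≡ bs * β i [ZMOD (r:ℤ)] := Int.emod_emod_of_dvd _ dvd_rfl
    have e3 := e1.trans (e2.add_left ((k i : ℕ) : ℤ))
    obtain ⟨t, ht⟩ := e3.dvd
    exact ⟨-t, by rw [h2]; linarith⟩
  -- the key congruence
  have key : ∀ k : Fin l → Fin r, (r:ℤ) ∣ ((g (σ k) - c) - e k) := by
    intro k
    set kZ : Fin l → ℤ := fun i => ((k i : ℕ) : ℤ) with hkZ
    set m : Fin l → ℤ := fun i => ((((σ k) i : ℕ) : ℤ) - ((k i : ℕ) : ℤ) - bs * β i) / r with hmdef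
    have hm : ∀ i, ((((σ k) i : ℕ) : ℤ)) = ((k i : ℕ) : ℤ) + bs * β i + r * m i := by
      intro i
      simp only [hmdef]
      linarith [Int.ediv_mul_cancel (hd k i)]
    have hfk : finVecQ k = intVecQ kZ := by
      funext i; simp [finVecQ, intVecQ, hkZ]
    have hfσ : finVecQ (σ k) = intVecQ kZ + (bs:ℚ) • intVecQ β + (r:ℚ) • intVecQ m := by
      funext i
      simp only [finVecQ, intVecQ, Pi.add_apply, Pi.smul_apply, smul_eq_mul, hkZ]
      exact_mod_cast hm i
    obtain ⟨s, hs⟩ := hbbs.dvd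
    obtain ⟨nρβ, hnρβ⟩ := hρ β
    obtain ⟨nρm, hnρm⟩ := hρ m
    obtain ⟨nkβ, hnkβ⟩ := hBint kZ β
    obtain ⟨nkm, hnkm⟩ := hBint kZ m
    obtain ⟨nβm, hnβm⟩ := hBint β m
    obtain ⟨nβ, hnβ⟩ := hBeven β
    obtain ⟨nm, hnm⟩ := hBeven m
    refine ⟨-s*(nρβ + nkβ) - s*bs*nβ + b*(nρm + nkm) + b*bs*nβm + r*b*nm, ?_⟩
    have hQ : (((g (σ k) - c) - e k : ℤ) : ℚ) =
        (((r:ℤ) * (-s*(nρβ + nkβ) - s*bs*nβ + b*(nρm + nkm) + b*bs*nβm + r*b*nm) : ℤ) : ℚ) := by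
      push_cast
      rw [hg (σ k), hc, he k, hfσ, hfk]
      simp only [map_add, map_smul, LinearMap.add_apply, LinearMap.smul_apply, smul_eq_mul]
      rw [hBsymm (intVecQ kZ) ρ, hBsymm (intVecQ β) ρ, hBsymm (intVecQ m) ρ,
        hBsymm (intVecQ β) (intVecQ kZ), hBsymm (intVecQ m) (intVecQ kZ),
        hBsymm (intVecQ m) (intVecQ β)]
      rw [← hnρβ, ← hnρm, ← hnkβ, ← hnkm, ← hnβm]
      have hnβ' : (2:ℚ) * (nβ:ℚ) = B (intVecQ β) (intVecQ β) := by exact_mod_cast hnβ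
      have hnm' : (2:ℚ) * (nm:ℚ) = B (intVecQ m) (intVecQ m) := by exact_mod_cast hnm
      rw [← hnβ', ← hnm']
      have hs' : (1:ℚ) - (b:ℚ)*(bs:ℚ) = (r:ℚ)*(s:ℚ) := by exact_mod_cast hs
      linear_combination (-( (nρβ:ℚ) + (nkβ:ℚ) + (bs:ℚ)*(nβ:ℚ) )) * hs'
    exact_mod_cast hQ
  calc ∑ k : Fin l → Fin r, ξ ^ (e k)
      = ∑ k : Fin l → Fin r, ξ ^ (g (σ k) - c) :=
        Finset.sum_congr rfl fun k _ => hper _ _ (key k)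
    _ = ∑ k : Fin l → Fin r, ξ ^ (-c) * ξ ^ (g (σ k)) := by
        refine Finset.sum_congr rfl fun k _ => ?_
        rw [show g (σ k) - c = -c + g (σ k) by ring, zpow_add₀ hξ0]
    _ = ξ ^ (-c) * ∑ k : Fin l → Fin r, ξ ^ (g (σ k)) := by rw [Finset.mul_sum]
    _ = ξ ^ (-c) * ∑ k : Fin l → Fin r, ξ ^ (g k) := by
        rw [Equiv.sum_comp σ (fun k => ξ ^ (g k))]
end

section
/- For every integer b and every β ∈ ℤ^ℓ, the element ∑_{k ∈ {0,…,r−1}^ℓ} ξ^{b(B(ρ+k,ρ+k) − B(ρ,ρ))/2 + B(ρ+k, β)} of ℤ[ξ] is divisible by (ξ−1)^{ℓ(r−1)/2} in ℤ[ξ]. -/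
open NumberField IntermediateField Algebra

section QuadraticFn

variable {X G M : Type*} [AddCommGroup X] [AddCommGroup G] [AddCommGroup M]

def secondDiff (Q : G → M) (x y : G) : M := Q (x + y) - Q x - Q y + Q 0

def IsQuadraticFn (Q : G → M) : Prop :=
  ∀ x x' y, secondDiff Q (x + x') y = secondDiff Q x y + secondDiff Q x' y

theorem IsQuadraticFn.map {N : Type*} [AddCommGroup N] {Q : G → M} (hQ : IsQuadraticFn Q)
    (f : M →+ N) : IsQuadraticFn (f ∘ Q) := by
  have h : ∀ x y, secondDiff (f ∘ Q) x y = f (secondDiff Q x y) := fun x y => by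
    simp [secondDiff]
  intro x x' y
  rw [h, h, h, hQ, map_add]

theorem IsQuadraticFn.exists_comp_eq {E : X → M} (hE : IsQuadraticFn E) (π : X →+ G)
    (hπ : Function.Surjective π) (hper : ∀ x k, π k = 0 → E (x + k) = E x) :
    ∃ Q : G → M, IsQuadraticFn Q ∧ ∀ x, Q (π x) = E x := by
  let Q : G → M := fun g => E (Function.surjInv hπ g)
  have hQπ : ∀ x, Q (π x) = E x := fun x => by
    simpa using hper x (Function.surjInv hπ (π x) - x) (by simp [Function.surjInv_eq hπ])
  refine ⟨Q, ?_, hQπ⟩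
  intro g g' h
  obtain ⟨x, rfl⟩ := hπ g
  obtain ⟨x', rfl⟩ := hπ g'
  obtain ⟨y, rfl⟩ := hπ h
  have h0 : Q 0 = E 0 := by simpa using hQπ 0
  simp only [secondDiff, ← map_add, hQπ, h0]
  exact hE x x' y

variable [Fintype G] {A : Type*} [CommRing A] [IsDomain A]

theorem IsQuadraticFn.card_dvd_sum_mul_sum_neg {Q : G → M} (hQ : IsQuadraticFn Q)
    (ψ : AddChar M A) : (Fintype.card G : A) ∣ (∑ g, ψ (Q g)) * ∑ g, ψ (-Q g) := by
  classical
  let χ : G → AddChar G A := fun m =>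
    ψ.compAddMonoidHom (AddMonoidHom.mk' (fun h => secondDiff Q h m) fun x x' => hQ x x' m)
  have hterm : ∀ h m, ψ (Q (h + m)) * ψ (-Q h) = ψ (Q m - Q 0) * χ m h := fun h m => by
    simp only [χ, AddChar.compAddMonoidHom_apply, AddMonoidHom.mk'_apply, secondDiff,
      ← AddChar.map_add_eq_mul]
    congr 1
    abel
  have hexpand : (∑ g, ψ (Q g)) * ∑ g, ψ (-Q g) = ∑ m, ψ (Q m - Q 0) * ∑ h, χ m h := by
    calc (∑ g, ψ (Q g)) * ∑ g, ψ (-Q g) = ∑ h, ∑ m, ψ (Q (h + m)) * ψ (-Q h) := by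
          rw [Finset.sum_mul_sum, Finset.sum_comm]
          exact Finset.sum_congr rfl fun h _ =>
            (Equiv.sum_comp (Equiv.addLeft h) fun g => ψ (Q g) * ψ (-Q h)).symm
      _ = ∑ m, ψ (Q m - Q 0) * ∑ h, χ m h := by
          rw [Finset.sum_comm]
          simp only [hterm, Finset.mul_sum]
  rw [hexpand]
  refine Finset.dvd_sum fun m _ => Dvd.dvd.mul_left ?_ _
  rw [AddChar.sum_eq_ite]
  split_ifs <;> simp

end QuadraticFn

theorem Prime.pow_dvd_of_pow_two_mul_dvd_mul_map {A : Type*} [CommMonoidWithZero A]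
    [IsCancelMulZero A] {p : A} (hp : Prime p) (σ : A →* A) (hσp : p ∣ σ p)
    (hσ : Function.Involutive σ) {a : A} {N : ℕ} (h : p ^ (2 * N) ∣ a * σ a) : p ^ N ∣ a := by
  have hmap : ∀ {b : A} {n : ℕ}, p ^ n ∣ b → p ^ n ∣ σ b := fun {b n} hb =>
    (pow_dvd_pow_of_dvd hσp n).trans (map_pow σ p n ▸ map_dvd σ hb)
  have hmult : emultiplicity p (σ a) = emultiplicity p a :=
    le_antisymm (emultiplicity_le_emultiplicity_iff.2 fun _ hn => hσ a ▸ hmap hn)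
      (emultiplicity_le_emultiplicity_iff.2 fun _ => hmap)
  rw [pow_dvd_iff_le_emultiplicity, emultiplicity_mul hp, hmult] at h
  rw [pow_dvd_iff_le_emultiplicity]
  generalize emultiplicity p a = k at h ⊢
  induction k using ENat.recTopCoe with
  | top => exact le_top
  | coe m => norm_cast at h ⊢; omega

theorem IsPrimitiveRoot.adjoin_sub_one_prime {L : Type*} [Field L] [CharZero L] {r : ℕ}
    [Fact r.Prime] {ξ : L} (hξ : IsPrimitiveRoot ξ r) :
    Prime ((⟨ξ, self_mem_adjoin_singleton ℤ ξ⟩ : ℤ[ξ]) - 1) := by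
  have : IsCyclotomicExtension {r} ℚ ℚ⟮ξ⟯ := by
    change IsCyclotomicExtension {r} ℚ ℚ⟮ξ⟯.toSubalgebra
    rw [adjoin_simple_toSubalgebra_of_isAlgebraic
      ((hξ.isIntegral (NeZero.pos r)).tower_top (A := ℚ)).isAlgebraic]
    exact hξ.adjoin_isCyclotomicExtension ℚ
  have hζ : IsPrimitiveRoot (AdjoinSimple.gen ℚ ξ) r :=
    IsPrimitiveRoot.coe_submonoidClass_iff.mp hξ
  let f : 𝓞 ℚ⟮ξ⟯ →ₐ[ℤ] L :=
    (IsScalarTower.toAlgHom ℤ ℚ⟮ξ⟯ L).comp (IsScalarTower.toAlgHom ℤ (𝓞 ℚ⟮ξ⟯) ℚ⟮ξ⟯)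
  have hf : Function.Injective f :=
    (FaithfulSMul.algebraMap_injective ℚ⟮ξ⟯ L).comp RingOfIntegers.coe_injective
  have hfζ : f hζ.toInteger = ξ := rfl
  -- `𝓞 ℚ(ξ) = ℤ[ζ]`, so its image in `L` is `ℤ[ξ]`
  have hrange : f.range = ℤ[ξ] := by
    rw [← Algebra.map_top, ← hζ.integralPowerBasis.adjoin_gen_eq_top,
      AlgHom.map_adjoin_singleton]
    simp [hfζ]
  let e := (AlgEquiv.ofInjective f hf).trans (Subalgebra.equivOfEq _ _ hrange)
  have he : e (hζ.toInteger - 1) = ⟨ξ, self_mem_adjoin_singleton ℤ ξ⟩ - 1 := by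
    ext
    simp [e, hfζ]
  rw [← he, MulEquiv.prime_iff e]
  exact hζ.zeta_sub_one_prime'

section ComplexConj

variable {r : ℕ} [NeZero r] {ξ : ℂ}

theorem IsPrimitiveRoot.conj_eq_pow (hξ : IsPrimitiveRoot ξ r) :
    starRingEnd ℂ ξ = ξ ^ (r - 1) := by
  rw [← Complex.inv_eq_conj (hξ.norm'_eq_one (NeZero.ne r))]
  refine inv_eq_of_mul_eq_one_left ?_
  rw [← pow_succ, Nat.sub_add_cancel NeZero.one_le, hξ.pow_eq_one]

theorem IsPrimitiveRoot.conj_mem_adjoin (hξ : IsPrimitiveRoot ξ r) {x : ℂ} (hx : x ∈ ℤ[ξ]) :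
    starRingEnd ℂ x ∈ ℤ[ξ] := by
  have hle : Subalgebra.map (starRingEnd ℂ).toIntAlgHom ℤ[ξ] ≤ ℤ[ξ] := by
    rw [AlgHom.map_adjoin_singleton]
    refine adjoin_le (Set.singleton_subset_iff.2 ?_)
    simpa [hξ.conj_eq_pow] using Subalgebra.pow_mem _ (self_mem_adjoin_singleton ℤ ξ) (r - 1)
  exact hle ⟨x, hx, rfl⟩

def IsPrimitiveRoot.conjAdjoin (hξ : IsPrimitiveRoot ξ r) : ℤ[ξ] →+* ℤ[ξ] :=
  (starRingEnd ℂ).restrict _ _ fun _ => hξ.conj_mem_adjoin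

theorem IsPrimitiveRoot.conjAdjoin_involutive (hξ : IsPrimitiveRoot ξ r) :
    Function.Involutive hξ.conjAdjoin :=
  fun x => Subtype.ext (Complex.conj_conj (x : ℂ))

theorem IsPrimitiveRoot.sub_one_dvd_conjAdjoin (hξ : IsPrimitiveRoot ξ r) :
    (⟨ξ, self_mem_adjoin_singleton ℤ ξ⟩ - 1 : ℤ[ξ]) ∣
      hξ.conjAdjoin (⟨ξ, self_mem_adjoin_singleton ℤ ξ⟩ - 1) := by
  rw [map_sub, map_one, show hξ.conjAdjoin ⟨ξ, _⟩ = ⟨ξ, _⟩ ^ (r - 1) from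
    Subtype.ext hξ.conj_eq_pow]
  exact sub_one_dvd_pow_sub_one _ _

theorem IsPrimitiveRoot.conjAdjoin_addChar (hξ : IsPrimitiveRoot ξ r) {G : Type*}
    [AddCommGroup G] [Finite G] (ψ : AddChar G ℤ[ξ]) (g : G) : hξ.conjAdjoin (ψ g) = ψ (-g) :=
  Subtype.ext ((ℤ[ξ].val.toMonoidHom.compAddChar ψ).map_neg_eq_conj g).symm

end ComplexConj

theorem zpow_eq_pow_zmod_val {C : Type*} [DivisionCommMonoid C] {r : ℕ} [Fact (1 < r)] {ζ : C}
    (hζ : ζ ^ r = 1) (n : ℤ) : ζ ^ n = ζ ^ (n : ZMod r).val := by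
  simpa [AddChar.zmodChar_apply, ZMod.val_one] using
    ((AddChar.zmodChar r hζ).map_zsmul_eq_zpow n 1).symm

theorem ZMod.natCast_fin_bijective (r : ℕ) [NeZero r] :
    Function.Bijective fun a : Fin r => ((a : ℕ) : ZMod r) := by
  refine (Fintype.bijective_iff_injective_and_card _).2 ⟨fun a b h => Fin.ext ?_, by simp⟩
  simpa [ZMod.val_cast_of_lt a.2, ZMod.val_cast_of_lt b.2] using congrArg ZMod.val h

theorem sum_zpow_eq_sum_pow_zmod_val {K : Type*} [Field K] {l r : ℕ} [Fact (1 < r)] {ζ : K}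
    (hζ : ζ ^ r = 1) (Q : (Fin l → ZMod r) → ZMod r) (e : (Fin l → Fin r) → ℤ)
    (hQe : ∀ k, Q (fun i => ((k i : ℕ) : ZMod r)) = e k) :
    ∑ k, ζ ^ e k = ∑ g, ζ ^ (Q g).val :=
  Fintype.sum_bijective _ (ZMod.natCast_fin_bijective r).comp_left _ _ fun k => by
    rw [zpow_eq_pow_zmod_val hζ, ← hQe]
    rfl

section GaussExponent

variable {l : ℕ} {B : (Fin l → ℚ) →ₗ[ℚ] (Fin l → ℚ) →ₗ[ℚ] ℚ} {ρ : Fin l → ℚ} {b : ℤ}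
  {β : Fin l → ℤ}

theorem intVecQ_add (x y : Fin l → ℤ) : intVecQ (x + y) = intVecQ x + intVecQ y := by
  ext i
  simp [intVecQ]

theorem intVecQ_zsmul (n : ℤ) (x : Fin l → ℤ) : intVecQ (n • x) = (n : ℚ) • intVecQ x := by
  ext i
  simp [intVecQ]

theorem intVecQ_zero : intVecQ (0 : Fin l → ℤ) = 0 := by
  ext i
  simp [intVecQ]

theorem finVecQ_eq_intVecQ {r : ℕ} (k : Fin l → Fin r) :
    finVecQ k = intVecQ fun i => ((k i : ℕ) : ℤ) := by
  ext i
  simp [finVecQ, intVecQ]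

def gaussExponent (B : (Fin l → ℚ) →ₗ[ℚ] (Fin l → ℚ) →ₗ[ℚ] ℚ) (ρ : Fin l → ℚ) (b : ℤ)
    (β x : Fin l → ℤ) : ℚ :=
  b * (B (ρ + intVecQ x) (ρ + intVecQ x) - B ρ ρ) / 2 + B (ρ + intVecQ x) (intVecQ β)

theorem gaussExponent_eq (hBsymm : ∀ x y, B x y = B y x) (x : Fin l → ℤ) :
    gaussExponent B ρ b β x = B ρ (intVecQ β)
      + b * (B (intVecQ x) (intVecQ x) / 2 + B ρ (intVecQ x)) + B (intVecQ x) (intVecQ β) := by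
  simp only [gaussExponent, map_add, LinearMap.add_apply, hBsymm (intVecQ x) ρ]
  ring

theorem secondDiff_gaussExponent (hBsymm : ∀ x y, B x y = B y x) (x y : Fin l → ℤ) :
    secondDiff (gaussExponent B ρ b β) x y = b * B (intVecQ x) (intVecQ y) := by
  simp only [secondDiff, gaussExponent_eq hBsymm, intVecQ_add, intVecQ_zero, map_add, map_zero,
    LinearMap.add_apply, LinearMap.zero_apply, hBsymm (intVecQ y) (intVecQ x)]
  ring

theorem isQuadraticFn_gaussExponent (hBsymm : ∀ x y, B x y = B y x) :
    IsQuadraticFn (gaussExponent B ρ b β) := by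
  intro x x' y
  simp only [secondDiff_gaussExponent hBsymm, intVecQ_add, map_add, LinearMap.add_apply]
  ring

theorem exists_intCast_eq_gaussExponent (hBsymm : ∀ x y, B x y = B y x)
    (hBint : ∀ x y : Fin l → ℤ, ∃ n : ℤ, (n : ℚ) = B (intVecQ x) (intVecQ y))
    (hBeven : ∀ y : Fin l → ℤ, ∃ n : ℤ, ((2 * n : ℤ) : ℚ) = B (intVecQ y) (intVecQ y))
    (hρ : ∀ y : Fin l → ℤ, ∃ n : ℤ, (n : ℚ) = B ρ (intVecQ y))
    (x : Fin l → ℤ) :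
    ∃ n : ℤ, (n : ℚ) = gaussExponent B ρ b β x := by
  obtain ⟨n₀, h₀⟩ := hρ β
  obtain ⟨n₁, h₁⟩ := hBeven x
  obtain ⟨n₂, h₂⟩ := hρ x
  obtain ⟨n₃, h₃⟩ := hBint x β
  refine ⟨n₀ + b * (n₁ + n₂) + n₃, ?_⟩
  rw [gaussExponent_eq hBsymm, ← h₀, ← h₁, ← h₂, ← h₃]
  push_cast
  ring

theorem exists_gaussExponent_add_zsmul (hBsymm : ∀ x y, B x y = B y x)
    (hBint : ∀ x y : Fin l → ℤ, ∃ n : ℤ, (n : ℚ) = B (intVecQ x) (intVecQ y))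
    (hBeven : ∀ y : Fin l → ℤ, ∃ n : ℤ, ((2 * n : ℤ) : ℚ) = B (intVecQ y) (intVecQ y))
    (hρ : ∀ y : Fin l → ℤ, ∃ n : ℤ, (n : ℚ) = B ρ (intVecQ y))
    (x u : Fin l → ℤ) (m : ℤ) :
    ∃ n : ℤ, gaussExponent B ρ b β (x + m • u) = gaussExponent B ρ b β x + m * n := by
  obtain ⟨n₁, h₁⟩ := hBeven u
  obtain ⟨n₂, h₂⟩ := hρ u
  obtain ⟨n₃, h₃⟩ := hBint u β
  obtain ⟨n₄, h₄⟩ := hBint x u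
  refine ⟨b * (n₄ + m * n₁ + n₂) + n₃, ?_⟩
  simp only [gaussExponent_eq hBsymm, intVecQ_add, intVecQ_zsmul, map_add, map_smul,
    LinearMap.add_apply, LinearMap.smul_apply, smul_eq_mul, hBsymm (intVecQ u) (intVecQ x)]
  push_cast at h₁
  rw [← h₁, ← h₂, ← h₃, ← h₄]
  push_cast
  ring

theorem exists_isQuadraticFn_zmod_gaussExponent (hBsymm : ∀ x y, B x y = B y x)
    (hBint : ∀ x y : Fin l → ℤ, ∃ n : ℤ, (n : ℚ) = B (intVecQ x) (intVecQ y))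
    (hBeven : ∀ y : Fin l → ℤ, ∃ n : ℤ, ((2 * n : ℤ) : ℚ) = B (intVecQ y) (intVecQ y))
    (hρ : ∀ y : Fin l → ℤ, ∃ n : ℤ, (n : ℚ) = B ρ (intVecQ y))
    (r : ℕ) :
    ∃ Q : (Fin l → ZMod r) → ZMod r, IsQuadraticFn Q ∧
      ∀ (x : Fin l → ℤ) (n : ℤ), (n : ℚ) = gaussExponent B ρ b β x →
        Q (fun i => (x i : ZMod r)) = n := by
  choose E hE using exists_intCast_eq_gaussExponent hBsymm hBint hBeven hρ (b := b) (β := β)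
  have hEquad : IsQuadraticFn E := fun x x' y => Int.cast_injective (α := ℚ) <| by
    simpa only [secondDiff, Int.cast_add, Int.cast_sub, hE] using
      isQuadraticFn_gaussExponent hBsymm x x' y
  let π : (Fin l → ℤ) →+ (Fin l → ZMod r) :=
    AddMonoidHom.compLeft (Int.castAddHom (ZMod r)) (Fin l)
  have hπ : Function.Surjective π := ZMod.intCast_surjective.comp_left
  have hper : ∀ x k, π k = 0 → ((E (x + k) : ℤ) : ZMod r) = E x := by
    intro x k hk
    obtain ⟨u, rfl⟩ : ∃ u, k = (r : ℤ) • u := ⟨fun i => k i / r, funext fun i =>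
      (Int.mul_ediv_cancel' ((ZMod.intCast_zmod_eq_zero_iff_dvd _ _).1 (congrFun hk i))).symm⟩
    obtain ⟨n, hn⟩ := exists_gaussExponent_add_zsmul hBsymm hBint hBeven hρ x u r
    have : E (x + (r : ℤ) • u) = E x + r * n := Int.cast_injective (α := ℚ) <| by
      push_cast
      rw [hE, hE, hn, Int.cast_natCast]
    rw [this]
    push_cast
    simp
  obtain ⟨Q, hQ, hQπ⟩ := (hEquad.map (Int.castAddHom (ZMod r))).exists_comp_eq π hπ hper
  refine ⟨Q, hQ, fun x n hn => ?_⟩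
  rw [show n = E x from Int.cast_injective (α := ℚ) (hn.trans (hE x).symm)]
  exact hQπ x

end GaussExponent

theorem stmt2_general (l r : ℕ) (hrp : Nat.Prime r)
    (B : (Fin l → ℚ) →ₗ[ℚ] (Fin l → ℚ) →ₗ[ℚ] ℚ)
    (hBsymm : ∀ x y, B x y = B y x)
    (hBint : ∀ x y : Fin l → ℤ, ∃ n : ℤ, (n : ℚ) = B (intVecQ x) (intVecQ y))
    (hBeven : ∀ y : Fin l → ℤ, ∃ n : ℤ, ((2 * n : ℤ) : ℚ) = B (intVecQ y) (intVecQ y))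
    (ρ : Fin l → ℚ)
    (hρ : ∀ y : Fin l → ℤ, ∃ n : ℤ, (n : ℚ) = B ρ (intVecQ y))
    (ξ : ℂ) (hξ : IsPrimitiveRoot ξ r)
    (b : ℤ) (β : Fin l → ℤ)
    (e : (Fin l → Fin r) → ℤ)
    (he : ∀ k : Fin l → Fin r, ((e k : ℤ) : ℚ) =
      (b : ℚ) * (B (ρ + finVecQ k) (ρ + finVecQ k) - B ρ ρ) / 2
        + B (ρ + finVecQ k) (intVecQ β)) :
    ∃ cc ∈ Subring.closure ({ξ} : Set ℂ),
      ∑ k : Fin l → Fin r, ξ ^ (e k) = (ξ - 1) ^ (l * (r - 1) / 2) * cc := by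
  have := Fact.mk hrp
  obtain ⟨Q, hQ, hQe⟩ := exists_isQuadraticFn_zmod_gaussExponent hBsymm hBint hBeven hρ r
    (b := b) (β := β)
  let z : ℤ[ξ] := ⟨ξ, self_mem_adjoin_singleton ℤ ξ⟩
  have hz : IsPrimitiveRoot z r := IsPrimitiveRoot.coe_submonoidClass_iff.mp hξ
  let ψ := AddChar.zmodChar r hz.pow_eq_one
  let S := ∑ g, ψ (Q g)
  have hsum : ∑ k, ξ ^ e k = (S : ℂ) := by
    rw [sum_zpow_eq_sum_pow_zmod_val hξ.pow_eq_one Q e fun k => by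
      simpa using hQe (fun i => ((k i : ℕ) : ℤ)) (e k) (by rw [he k, finVecQ_eq_intVecQ]; rfl)]
    push_cast [S, ψ, z, AddChar.zmodChar_apply]
    rfl
  have hdvd : (z - 1) ^ (2 * (l * (r - 1) / 2)) ∣ S * hξ.conjAdjoin S := by
    obtain ⟨y, -, hy⟩ := hz.self_sub_one_pow_dvd_order (Nat.sub_lt hrp.pos one_pos)
    have hcard := hQ.card_dvd_sum_mul_sum_neg ψ
    simp only [← hξ.conjAdjoin_addChar, ← map_sum, Fintype.card_fun, ZMod.card,
      Fintype.card_fin, Nat.cast_pow, hy, mul_pow, ← pow_mul] at hcard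
    refine (pow_dvd_pow _ ?_).trans ((dvd_mul_left _ _).trans hcard)
    rw [Nat.mul_comm (r - 1)]
    exact Nat.mul_div_le _ _
  obtain ⟨c, hc⟩ := hξ.adjoin_sub_one_prime.pow_dvd_of_pow_two_mul_dvd_mul_map hξ.conjAdjoin
    hξ.sub_one_dvd_conjAdjoin hξ.conjAdjoin_involutive hdvd
  refine ⟨c, by simpa only [adjoin_int, mem_subalgebraOfSubring] using c.2, ?_⟩
  rw [hsum, hc]
  push_cast
  rfl

/-- for every integer `b` and every `β ∈ ℤ^ℓ`, the shifted Gauss sum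
`∑_{k ∈ {0,…,r−1}^ℓ} ξ^{b(B(ρ+k,ρ+k) − B(ρ,ρ))/2 + B(ρ+k, β)}` is divisible by
`(ξ−1)^{ℓ(r−1)/2}` in `ℤ[ξ]`. -/
theorem stmt2 (l r : ℕ) (hl : 0 < l) (hrp : Nat.Prime r) (hodd : Odd r)
    (B : (Fin l → ℚ) →ₗ[ℚ] (Fin l → ℚ) →ₗ[ℚ] ℚ)
    (hBsymm : ∀ x y, B x y = B y x)
    (hBint : ∀ x y : Fin l → ℤ, ∃ n : ℤ, (n : ℚ) = B (intVecQ x) (intVecQ y))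
    (hBeven : ∀ y : Fin l → ℤ, ∃ n : ℤ, ((2 * n : ℤ) : ℚ) = B (intVecQ y) (intVecQ y))
    (ρ : Fin l → ℚ)
    (hρ : ∀ y : Fin l → ℤ, ∃ n : ℤ, (n : ℚ) = B ρ (intVecQ y))
    (dP : ℤ)
    (hdP : (dP : ℚ) = (Matrix.of fun i j : Fin l => B (Pi.single i 1) (Pi.single j 1)).det)
    (hcop : IsCoprime (r : ℤ) dP)
    (ξ : ℂ) (hξ : IsPrimitiveRoot ξ r)
    (b : ℤ) (β : Fin l → ℤ)
    (e : (Fin l → Fin r) → ℤ)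
    (he : ∀ k : Fin l → Fin r, ((e k : ℤ) : ℚ) =
      (b : ℚ) * (B (ρ + finVecQ k) (ρ + finVecQ k) - B ρ ρ) / 2
        + B (ρ + finVecQ k) (intVecQ β)) :
    ∃ cc ∈ Subring.closure ({ξ} : Set ℂ),
      ∑ k : Fin l → Fin r, ξ ^ (e k) = (ξ - 1) ^ (l * (r - 1) / 2) * cc :=
  stmt2_general l r hrp B hBsymm hBint hBeven ρ hρ ξ hξ b β e he
end

section
/- Let r be an odd prime and ξ ∈ ℂ a primitive r-th root of unity. Let n be a positive integer and let p ∈ ℚ[x_1,…,x_n] be a polynomial of total degree deg p such that p(k) ∈ ℤ for every k ∈ ℤ^n. Set x := ∑_{k ∈ {0,…,r−1}^n} p(k) ∈ ℤ and N := n(r−1)/2 − ⌊(deg p)/2⌋. If N ≥ 0, then (ξ−1)^N divides x in ℤ[ξ]. -/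
open MvPolynomial Finset Function fwdDiff

noncomputable section Stmt5Aux

/-- substitution sending `X 0 ↦ X 0 + 1`. -/
def sub1 (n : ℕ) : Fin (n+1) → MvPolynomial (Fin (n+1)) ℚ :=
  fun i => if i = 0 then X 0 + 1 else X i

/-- difference operator in the first variable. -/
def dd {n : ℕ} (q : MvPolynomial (Fin (n+1)) ℚ) : MvPolynomial (Fin (n+1)) ℚ :=
  MvPolynomial.aeval (sub1 n) q - q

/-- set first variable to `0`. -/
def ph0 {n : ℕ} (q : MvPolynomial (Fin (n+1)) ℚ) : MvPolynomial (Fin n) ℚ :=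
  MvPolynomial.aeval (Fin.cases 0 X) q

lemma myEvalAeval {σ τ : Type*} (g : σ → MvPolynomial τ ℚ) (v : τ → ℚ)
    (q : MvPolynomial σ ℚ) :
    MvPolynomial.eval v (MvPolynomial.aeval g q) = MvPolynomial.eval (fun i => MvPolynomial.eval v (g i)) q := by
  induction q using MvPolynomial.induction_on with
  | C a => simp
  | add p q hp hq => simp only [map_add, hp, hq]
  | mul_X p i hp => simp only [map_mul, aeval_X, eval_mul, eval_X, hp]

lemma eval_dd {n : ℕ} (q : MvPolynomial (Fin (n+1)) ℚ) (a : ℚ) (v : Fin n → ℚ) :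
    MvPolynomial.eval (Fin.cons a v) (dd q)
      = MvPolynomial.eval (Fin.cons (a+1) v) q - MvPolynomial.eval (Fin.cons a v) q := by
  unfold dd
  rw [map_sub, myEvalAeval]
  have h : (fun i => MvPolynomial.eval (Fin.cons a v) (sub1 n i)) = Fin.cons (a+1) v := by
    funext i
    refine Fin.cases ?_ (fun j => ?_) i <;> simp [sub1, Fin.succ_ne_zero]
  rw [h]

lemma eval_ph0 {n : ℕ} (q : MvPolynomial (Fin (n+1)) ℚ) (v : Fin n → ℚ) :
    MvPolynomial.eval v (ph0 q) = MvPolynomial.eval (Fin.cons 0 v) q := by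
  unfold ph0
  rw [myEvalAeval]
  have h : (fun i => MvPolynomial.eval v (Fin.cases 0 X i)) = Fin.cons (0:ℚ) v := by
    funext i
    refine Fin.cases ?_ (fun j => ?_) i <;> simp
  rw [h]

lemma aeval_sub1_monomial {n : ℕ} (m : Fin (n+1) →₀ ℕ) (c : ℚ) :
    MvPolynomial.aeval (sub1 n) (monomial m c)
      = C c * ((X 0 + 1) ^ (m 0) * monomial (m.erase 0) (1:ℚ)) := by
  rw [aeval_monomial, ← Finsupp.mul_prod_erase' m 0 _ (fun i => pow_zero _)]
  have h1 : sub1 n 0 ^ m 0 = (X 0 + 1) ^ m 0 := by simp [sub1]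
  have h2 : (m.erase 0).prod (fun i k => sub1 n i ^ k)
      = monomial (m.erase 0) (1:ℚ) := by
    rw [monomial_eq, C_1, one_mul]
    refine Finsupp.prod_congr (fun i hi => ?_)
    have : i ≠ 0 := by
      intro h; rw [h] at hi; simp [Finsupp.support_erase] at hi
    simp [sub1, this]
  rw [h1, h2]
  rfl

lemma monomial_split {n : ℕ} (m : Fin (n+1) →₀ ℕ) (c : ℚ) :
    (monomial m c : MvPolynomial (Fin (n+1)) ℚ)
      = C c * (X 0 ^ (m 0) * monomial (m.erase 0) (1:ℚ)) := by
  rw [monomial_eq, ← Finsupp.mul_prod_erase' m 0 _ (fun i => pow_zero _)]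
  congr 1
  rw [monomial_eq, C_1, one_mul]

lemma dd_monomial {n : ℕ} (m : Fin (n+1) →₀ ℕ) (c : ℚ) :
    dd (monomial m c)
      = C c * ((((X 0 + 1) ^ (m 0)) - X 0 ^ (m 0)) * monomial (m.erase 0) (1:ℚ)) := by
  unfold dd
  rw [aeval_sub1_monomial]
  nth_rewrite 2 [monomial_split]
  ring

lemma pow_diff_deg {n : ℕ} (a : ℕ) :
    (((X 0 + 1 : MvPolynomial (Fin (n+1)) ℚ)) ^ a - X 0 ^ a).totalDegree ≤ a - 1 := by
  have h : ((X 0 + 1 : MvPolynomial (Fin (n+1)) ℚ)) ^ a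
      = ∑ k ∈ range (a+1), X 0 ^ k * ((a.choose k : ℕ) : MvPolynomial (Fin (n+1)) ℚ) := by
    have := add_pow (X 0 : MvPolynomial (Fin (n+1)) ℚ) 1 a
    simpa using this
  rw [h, sum_range_succ, Nat.choose_self, Nat.cast_one, mul_one, add_sub_cancel_right]
  refine totalDegree_finsetSum_le (fun k hk => ?_)
  have hC : ((a.choose k : ℕ) : MvPolynomial (Fin (n+1)) ℚ) = C ((a.choose k : ℕ) : ℚ) :=
    (map_natCast (C : ℚ →+* MvPolynomial (Fin (n+1)) ℚ) _).symm
  calc (X 0 ^ k * ((a.choose k : ℕ) : MvPolynomial (Fin (n+1)) ℚ)).totalDegree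
      ≤ (X 0 ^ k : MvPolynomial (Fin (n+1)) ℚ).totalDegree
        + (((a.choose k : ℕ) : MvPolynomial (Fin (n+1)) ℚ)).totalDegree := totalDegree_mul _ _
    _ ≤ k + 0 := by
        rw [hC, totalDegree_C, totalDegree_X_pow]
    _ ≤ a - 1 := by
        have := mem_range.mp hk
        omega

lemma dd_monomial_deg {n : ℕ} (m : Fin (n+1) →₀ ℕ) (c : ℚ) :
    (dd (monomial m c)).totalDegree ≤ (m.sum fun _ e => e) - 1 := by
  rw [dd_monomial]
  by_cases hm : c = 0
  · simp [hm]
  rcases Nat.eq_zero_or_pos (m 0) with h0 | h0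
  · simp [h0]
  have hsum : m 0 + ((m.erase 0).sum fun _ e => e) = m.sum fun _ e => e :=
    Finsupp.add_sum_erase' m 0 (fun _ e => e) (fun _ => rfl)
  calc ((C c * ((((X 0 + 1) ^ (m 0)) - X 0 ^ (m 0)) * monomial (m.erase 0) (1:ℚ)) :
        MvPolynomial (Fin (n+1)) ℚ)).totalDegree
      ≤ (C c : MvPolynomial (Fin (n+1)) ℚ).totalDegree
        + (((((X 0 + 1) ^ (m 0)) - X 0 ^ (m 0)) * monomial (m.erase 0) (1:ℚ))).totalDegree :=
        totalDegree_mul _ _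
    _ ≤ 0 + ((((X 0 + 1) ^ (m 0) - X 0 ^ (m 0) : MvPolynomial (Fin (n+1)) ℚ)).totalDegree
        + ((monomial (m.erase 0) (1:ℚ) : MvPolynomial (Fin (n+1)) ℚ)).totalDegree) := by
        rw [totalDegree_C]
        exact Nat.add_le_add_left (totalDegree_mul _ _) 0
    _ ≤ (m 0 - 1) + ((m.erase 0).sum fun _ e => e) := by
        rw [zero_add, totalDegree_monomial _ (one_ne_zero)]
        exact Nat.add_le_add_right (pow_diff_deg _) _
    _ ≤ (m.sum fun _ e => e) - 1 := by omega

lemma dd_deg {n : ℕ} (q : MvPolynomial (Fin (n+1)) ℚ) :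
    (dd q).totalDegree ≤ q.totalDegree - 1 := by
  have hq : dd q = ∑ m ∈ q.support, dd (monomial m (q.coeff m)) := by
    unfold dd
    conv_lhs => rw [← support_sum_monomial_coeff q]
    rw [map_sum, ← Finset.sum_sub_distrib]
  rw [hq]
  refine totalDegree_finsetSum_le (fun m hm => ?_)
  exact (dd_monomial_deg m _).trans (Nat.sub_le_sub_right (le_totalDegree hm) 1)

lemma dd_zero_of_deg0 {n : ℕ} (q : MvPolynomial (Fin (n+1)) ℚ) (h : q.totalDegree = 0) :
    dd q = 0 := by
  have hq : dd q = ∑ m ∈ q.support, dd (monomial m (q.coeff m)) := by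
    unfold dd
    conv_lhs => rw [← support_sum_monomial_coeff q]
    rw [map_sum, ← Finset.sum_sub_distrib]
  rw [hq]
  refine Finset.sum_eq_zero (fun m hm => ?_)
  have h0 : m 0 = 0 := (totalDegree_eq_zero_iff _ q).mp h m hm 0
  rw [dd_monomial, h0]
  simp

lemma dd_iter_deg {n : ℕ} (q : MvPolynomial (Fin (n+1)) ℚ) (j : ℕ) :
    (dd^[j] q).totalDegree ≤ q.totalDegree - j := by
  induction j with
  | zero => simp
  | succ j ih =>
    rw [Function.iterate_succ_apply']
    exact (dd_deg _).trans (by omega)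

lemma dd_iter_zero {n : ℕ} (q : MvPolynomial (Fin (n+1)) ℚ) (j : ℕ)
    (h : q.totalDegree < j) : dd^[j] q = 0 := by
  obtain ⟨t, rfl⟩ : ∃ t, j = (q.totalDegree + 1) + t := ⟨j - (q.totalDegree+1), by omega⟩
  have e : q.totalDegree + 1 + t = t + (1 + q.totalDegree) := by omega
  rw [e, Function.iterate_add_apply, Function.iterate_add_apply, Function.iterate_one]
  have h1 : (dd^[q.totalDegree] q).totalDegree = 0 := by
    have := dd_iter_deg q q.totalDegree
    omega
  rw [dd_zero_of_deg0 _ h1]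
  exact Function.iterate_fixed (by unfold dd; simp) t

lemma ph0_deg {n : ℕ} (q : MvPolynomial (Fin (n+1)) ℚ) :
    (ph0 q).totalDegree ≤ q.totalDegree := by
  have hq : ph0 q = ∑ m ∈ q.support, MvPolynomial.aeval (Fin.cases 0 X) (monomial m (q.coeff m)) := by
    unfold ph0
    conv_lhs => rw [← support_sum_monomial_coeff q]
    rw [map_sum]
  rw [hq]
  refine totalDegree_finsetSum_le (fun m hm => ?_)
  rw [aeval_monomial]
  refine le_trans (totalDegree_mul _ _) ?_
  have h1 : (algebraMap ℚ (MvPolynomial (Fin n) ℚ) (q.coeff m)).totalDegree = 0 := totalDegree_C _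
  rw [h1, zero_add]
  refine le_trans (le_trans (totalDegree_finset_prod _ _) ?_) (le_totalDegree hm)
  rw [Finsupp.sum]
  refine Finset.sum_le_sum (fun i hi => ?_)
  simp only []
  by_cases hi0 : i = 0
  · subst hi0
    have hm0 : m 0 ≠ 0 := Finsupp.mem_support_iff.mp hi
    rw [Fin.cases_zero, zero_pow hm0]
    simp
  · obtain ⟨j, rfl⟩ := Fin.eq_succ_of_ne_zero hi0
    rw [Fin.cases_succ]
    refine le_trans (totalDegree_pow _ _) ?_
    simp [totalDegree_X]

/-- the values of `q` along the first variable, other variables fixed at `v`. -/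
def fq {n : ℕ} (q : MvPolynomial (Fin (n+1)) ℚ) (v : Fin n → ℚ) : ℕ → ℚ :=
  fun a => MvPolynomial.eval (Fin.cons (a:ℚ) v) q

lemma fq_dd {n : ℕ} (q : MvPolynomial (Fin (n+1)) ℚ) (v : Fin n → ℚ) :
    fq (dd q) v = Δ_[1] (fq q v) := by
  funext a
  show MvPolynomial.eval (Fin.cons ((a:ℕ):ℚ) v) (dd q) = _
  rw [eval_dd]
  have : (((a+1:ℕ)):ℚ) = ((a:ℕ):ℚ) + 1 := by push_cast; ring
  simp [fwdDiff, fq, this]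

lemma fq_dd_iter {n : ℕ} (q : MvPolynomial (Fin (n+1)) ℚ) (v : Fin n → ℚ) (j : ℕ) :
    fq (dd^[j] q) v = (Δ_[1])^[j] (fq q v) := by
  induction j with
  | zero => simp
  | succ j ih =>
    rw [Function.iterate_succ_apply', Function.iterate_succ_apply', ← ih, fq_dd]

lemma eval_ph0_fq {n : ℕ} (q : MvPolynomial (Fin (n+1)) ℚ) (v : Fin n → ℚ) :
    MvPolynomial.eval v (ph0 q) = fq q v 0 := by
  rw [eval_ph0]
  show _ = MvPolynomial.eval (Fin.cons ((0:ℕ):ℚ) v) q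
  norm_num

lemma sum_range_choose_eq (j : ℕ) : ∀ r : ℕ, ∑ a ∈ range r, a.choose j = r.choose (j+1) := by
  intro r
  induction r with
  | zero => simp
  | succ r ih =>
    rw [sum_range_succ, ih]
    have := Nat.choose_succ_succ' r j
    omega

lemma sum_f (f : ℕ → ℚ) (r : ℕ) :
    ∑ a ∈ range r, f a = ∑ j ∈ range r, (r.choose (j+1) : ℚ) * (Δ_[1])^[j] f 0 := by
  have hN : ∀ a ∈ range r, f a = ∑ j ∈ range r, (a.choose j : ℚ) * (Δ_[1])^[j] f 0 := by
    intro a ha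
    have h0 := shift_eq_sum_fwdDiff_iter 1 f a 0
    simp only [zero_add, smul_eq_mul, mul_one] at h0
    rw [h0]
    have hsub : range (a+1) ⊆ range r := by
      intro t ht
      simp only [mem_range] at *
      omega
    rw [Finset.sum_subset hsub]
    · refine Finset.sum_congr rfl (fun j hj => ?_)
      rw [nsmul_eq_mul]
    · intro j hj hj2
      simp only [mem_range, not_lt] at hj2
      rw [Nat.choose_eq_zero_of_lt (by omega)]
      simp
  rw [Finset.sum_congr rfl hN, Finset.sum_comm]
  refine Finset.sum_congr rfl (fun j hj => ?_)
  rw [← Finset.sum_mul, ← Nat.cast_sum, sum_range_choose_eq]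

/-- The key induction: the big sum is an integer divisible by
`r ^ (n - totalDegree/(r-1))`. -/
lemma key (r : ℕ) (hr : Nat.Prime r) :
    ∀ (n : ℕ) (q : MvPolynomial (Fin n) ℚ),
      (∀ k : Fin n → ℤ, ∃ m : ℤ, (m:ℚ) = MvPolynomial.eval (fun i => (k i:ℚ)) q) →
      ∃ m : ℤ, (m:ℚ) = (∑ k : Fin n → Fin r, MvPolynomial.eval (fun i => ((k i : ℕ):ℚ)) q)
        ∧ (r:ℤ)^(n - q.totalDegree/(r-1)) ∣ m := by
  intro n
  induction n with
  | zero =>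
    intro q hq
    obtain ⟨m, hm⟩ := hq (fun i => i.elim0)
    refine ⟨m, ?_, by simp⟩
    rw [Fintype.sum_unique]
    have hpt : (fun i : Fin 0 => ((((default : Fin 0 → Fin r)) i : ℕ):ℚ)) = (fun i : Fin 0 => ((i.elim0 : ℤ):ℚ)) := by
      funext i
      exact i.elim0
    rw [hpt] at *
    exact hm
  | succ n ih =>
    intro q hq
    have hr1 : 1 < r := hr.one_lt
    set d := q.totalDegree with hd
    set cj : ℕ → MvPolynomial (Fin n) ℚ := fun j => ph0 (dd^[j] q) with hcj
    have hcjval : ∀ (j : ℕ) (v : Fin n → ℚ),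
        MvPolynomial.eval v (cj j) = (Δ_[1])^[j] (fq q v) 0 := by
      intro j v
      rw [hcj]
      simp only []
      rw [eval_ph0_fq, fq_dd_iter]
    -- integrality of the coefficient polynomials
    have hIV : ∀ (j : ℕ) (k : Fin n → ℤ), ∃ m : ℤ,
        (m:ℚ) = MvPolynomial.eval (fun i => (k i:ℚ)) (cj j) := by
      intro j k
      rw [hcjval]
      rw [fwdDiff_iter_eq_sum_shift]
      choose M hM using hq
      refine ⟨∑ i ∈ range (j+1), ((-1:ℤ)^(j-i) * (j.choose i : ℤ)) * M ((Fin.cons (i:ℤ) k : Fin (n+1) → ℤ)), ?_⟩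
      push_cast
      refine Finset.sum_congr rfl (fun i hi => ?_)
      rw [zsmul_eq_mul]
      push_cast
      congr 1
      rw [hM ((Fin.cons (i:ℤ) k : Fin (n+1) → ℤ))]
      have hv : (fun t => (((Fin.cons (i:ℤ) k : Fin (n+1) → ℤ) t : ℤ):ℚ)) = Fin.cons ((i:ℕ):ℚ) (fun t => (k t : ℚ)) := by
        funext t
        refine Fin.cases ?_ (fun s => ?_) t <;> simp
      rw [hv]
      show _ = fq q _ (0 + i • 1)
      simp [fq]
    -- the main identity
    have hptfun : ∀ (a : Fin r) (k' : Fin n → Fin r),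
        (fun i => (((Fin.cons a k' : Fin (n+1) → Fin r) i : ℕ):ℚ)) = Fin.cons ((a:ℕ):ℚ) (fun i => ((k' i : ℕ):ℚ)) := by
      intro a k'
      funext t
      refine Fin.cases ?_ (fun s => ?_) t <;> simp
    have main : (∑ k : Fin (n+1) → Fin r, MvPolynomial.eval (fun i => ((k i : ℕ):ℚ)) q)
        = ∑ j ∈ range r, (r.choose (j+1) : ℚ) *
            (∑ k' : Fin n → Fin r, MvPolynomial.eval (fun i => ((k' i : ℕ):ℚ)) (cj j)) := by
      rw [← Equiv.sum_comp (Fin.consEquiv (fun _ : Fin (n+1) => Fin r))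
        (fun k => MvPolynomial.eval (fun i => ((k i : ℕ):ℚ)) q), Fintype.sum_prod_type]
      simp only [Fin.consEquiv_apply]
      rw [Finset.sum_comm]
      have inner : ∀ k' : Fin n → Fin r,
          ∑ a : Fin r, MvPolynomial.eval (fun i => (((Fin.cons a k' : Fin (n+1) → Fin r) i : ℕ):ℚ)) q
          = ∑ j ∈ range r, (r.choose (j+1) : ℚ) *
              MvPolynomial.eval (fun i => ((k' i : ℕ):ℚ)) (cj j) := by
        intro k'
        have h1 : ∀ a : Fin r, MvPolynomial.eval (fun i => (((Fin.cons a k' : Fin (n+1) → Fin r) i : ℕ):ℚ)) q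
            = fq q (fun i => ((k' i : ℕ):ℚ)) (a:ℕ) := by
          intro a
          rw [hptfun]
          rfl
        rw [Finset.sum_congr rfl (fun a _ => h1 a), Fin.sum_univ_eq_sum_range, sum_f]
        refine Finset.sum_congr rfl (fun j hj => ?_)
        rw [hcjval]
      rw [Finset.sum_congr rfl (fun k' _ => inner k'), Finset.sum_comm]
      refine Finset.sum_congr rfl (fun j hj => ?_)
      rw [Finset.mul_sum]
    -- apply the induction hypothesis
    choose M2 hM2a hM2b using (fun j => ih (cj j) (hIV j))
    refine ⟨∑ j ∈ range r, (r.choose (j+1) : ℤ) * M2 j, ?_, ?_⟩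
    · rw [main]
      push_cast
      exact Finset.sum_congr rfl (fun j hj => by rw [hM2a j])
    · refine Finset.dvd_sum (fun j hj => ?_)
      by_cases hjd : d < j
      · have hz : cj j = 0 := by
          rw [hcj]
          simp only []
          rw [dd_iter_zero q j hjd]
          unfold ph0
          simp
        have hM2z : M2 j = 0 := by
          have h0 := hM2a j
          rw [hz] at h0
          simp at h0
          exact_mod_cast h0
        simp [hM2z]
      · push_neg at hjd
        have hdeg : (cj j).totalDegree ≤ d - j := le_trans (ph0_deg _) (dd_iter_deg q j)
        have hdvd1 : (r:ℤ)^(n - (d-j)/(r-1)) ∣ M2 j := by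
          refine dvd_trans (pow_dvd_pow _ ?_) (hM2b j)
          have := Nat.div_le_div_right (c := r-1) hdeg
          omega
        by_cases hjr : j + 1 < r
        · have hc : (r:ℤ) ∣ (r.choose (j+1) : ℤ) :=
            Int.natCast_dvd_natCast.mpr (Nat.Prime.dvd_choose_self hr (Nat.succ_ne_zero j) hjr)
          have h2 : (r:ℤ)^(1 + (n - (d-j)/(r-1))) ∣ (r.choose (j+1):ℤ) * M2 j := by
            rw [pow_add, pow_one]
            exact mul_dvd_mul hc hdvd1
          refine dvd_trans (pow_dvd_pow _ ?_) h2
          have hdj : (d-j)/(r-1) ≤ d/(r-1) := Nat.div_le_div_right (Nat.sub_le d j)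
          omega
        · have hjr' : j + 1 = r := by
            have := mem_range.mp hj
            omega
          have hle : r - 1 ≤ d := by omega
          have hdiv : d / (r-1) = (d - (r-1))/(r-1) + 1 := Nat.div_eq_sub_div (by omega) hle
          have hdj : d - j = d - (r-1) := by omega
          rw [hdj] at hdvd1
          refine dvd_trans (pow_dvd_pow _ ?_) (Dvd.dvd.mul_left hdvd1 _)
          omega

set_option maxHeartbeats 2000000 in
lemma xi_factor (r : ℕ) (hrp : Nat.Prime r) (ξ : ℂ) (hξ : IsPrimitiveRoot ξ r) :
    ∃ u ∈ Subring.closure ({ξ} : Set ℂ), (r:ℂ) = (ξ - 1)^(r-1) * u := by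
  have hr1 : 1 < r := hrp.one_lt
  have hfact : Fact (Nat.Prime r) := ⟨hrp⟩
  have hNZ : NeZero r := ⟨by omega⟩
  have hcyc : Polynomial.cyclotomic r ℂ
      = ∏ μ ∈ primitiveRoots r ℂ, (Polynomial.X - Polynomial.C μ) :=
    Polynomial.cyclotomic_eq_prod_X_sub_primitiveRoots hξ
  have hr : (r:ℂ) = ∏ μ ∈ primitiveRoots r ℂ, (1 - μ) := by
    have h1 := Polynomial.eval_one_cyclotomic_prime (R := ℂ) (p := r)
    rw [hcyc] at h1
    simpa [Polynomial.eval_prod] using h1.symm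
  have hfac : ∀ μ ∈ primitiveRoots r ℂ,
      ∃ c ∈ Subring.closure ({ξ} : Set ℂ), 1 - μ = (ξ - 1) * c := by
    intro μ hμ
    have hμr : μ ^ r = 1 := ((mem_primitiveRoots (by omega)).mp hμ).pow_eq_one
    obtain ⟨i, hi, rfl⟩ := hξ.eq_pow_of_pow_eq_one hμr
    refine ⟨-(∑ t ∈ range i, ξ^t), ?_, ?_⟩
    · exact Subring.neg_mem _ (Subring.sum_mem _ (fun t ht =>
        Subring.pow_mem _ (Subring.subset_closure (Set.mem_singleton ξ)) t))
    · have hg := geom_sum_mul ξ i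
      linear_combination hg
  have hprod : ∀ s : Finset ℂ,
      (∀ μ ∈ s, ∃ c ∈ Subring.closure ({ξ}:Set ℂ), 1 - μ = (ξ-1)*c) →
      ∃ u ∈ Subring.closure ({ξ}:Set ℂ), ∏ μ ∈ s, (1 - μ) = (ξ-1)^s.card * u := by
    intro s
    induction s using Finset.induction_on with
    | empty => exact fun _ => ⟨1, Subring.one_mem _, by simp⟩
    | @insert a s ha ih =>
      intro h
      obtain ⟨u, hu, hueq⟩ := ih (fun μ hμ => h μ (Finset.mem_insert_of_mem hμ))
      obtain ⟨c, hc, hceq⟩ := h a (Finset.mem_insert_self a s)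
      refine ⟨c * u, Subring.mul_mem _ hc hu, ?_⟩
      rw [Finset.prod_insert ha, Finset.card_insert_of_notMem ha, hueq, hceq]
      ring
  obtain ⟨u, hu, hueq⟩ := hprod _ hfac
  have hcard : (primitiveRoots r ℂ).card = r - 1 := by
    rw [hξ.card_primitiveRoots, Nat.totient_prime hrp]
  exact ⟨u, hu, by rw [hr, hueq, hcard]⟩

end Stmt5Aux

/-- if `p` is an integer-valued polynomial in `n` variables and
`x = ∑_{k ∈ {0,…,r−1}^n} p(k)`, then `(ξ−1)^{n(r−1)/2 − ⌊deg p/2⌋}` divides `x` in `ℤ[ξ]`,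
for `r` an odd prime and `ξ` a primitive `r`-th root of unity. -/
theorem stmt5 (r : ℕ) (hrp : Nat.Prime r) (hodd : Odd r)
    (ξ : ℂ) (hξ : IsPrimitiveRoot ξ r)
    (n : ℕ) (hn : 0 < n)
    (p : MvPolynomial (Fin n) ℚ)
    (hp : ∀ k : Fin n → ℤ, ∃ m : ℤ, (m : ℚ) = MvPolynomial.eval (fun i => (k i : ℚ)) p)
    (x : ℤ)
    (hx : (x : ℚ) = ∑ k : Fin n → Fin r, MvPolynomial.eval (fun i => ((k i : ℕ) : ℚ)) p)
    (N : ℤ) (hN : N = (n * (r - 1) / 2 : ℕ) - (p.totalDegree / 2 : ℕ)) (hN0 : 0 ≤ N) :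
    ∃ c ∈ Subring.closure ({ξ} : Set ℂ), (x : ℂ) = (ξ - 1) ^ N.toNat * c := by
  have hr1 : 1 < r := hrp.one_lt
  set d := p.totalDegree with hd
  obtain ⟨m, hmeq, hmdvd⟩ := key r hrp n p hp
  have hxm : m = x := by exact_mod_cast hmeq.trans hx.symm
  rw [hxm] at hmdvd
  set E := n - d/(r-1) with hE
  obtain ⟨y, hy⟩ := hmdvd
  obtain ⟨u, hu, hueq⟩ := xi_factor r hrp ξ hξ
  -- the exponent inequality
  have htN : N.toNat ≤ (r-1) * E := by
    set t := d/(r-1) with ht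
    have hst : t * (r-1) ≤ d := Nat.div_mul_le_self d (r-1)
    have h2A : 2 ∣ (r-1) := by
      obtain ⟨s, hs⟩ := hodd
      omega
    have h2st : 2 ∣ t * (r-1) := Dvd.dvd.mul_left h2A t
    have h2nA : 2 ∣ n * (r-1) := Dvd.dvd.mul_left h2A n
    have hBA : d/2 ≤ n*(r-1)/2 := by omega
    have hNt : N.toNat = n*(r-1)/2 - d/2 := by omega
    rcases Nat.lt_or_ge t n with hc | hc
    · have hmul : (r-1) * E = n*(r-1) - t*(r-1) := by
        rw [hE, Nat.mul_sub]
        ring_nf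
      rw [hNt, hmul]
      omega
    · have hz : E = 0 := by omega
      have : n * (r-1) ≤ t * (r-1) := Nat.mul_le_mul_right _ hc
      have : n*(r-1)/2 ≤ d/2 := by
        refine Nat.div_le_div_right ?_
        omega
      rw [hNt, hz]
      omega
  -- final construction
  have hxc : (x:ℂ) = (r:ℂ)^E * (y:ℂ) := by exact_mod_cast congrArg (Int.cast : ℤ → ℂ) hy
  refine ⟨(ξ-1)^((r-1)*E - N.toNat) * u^E * (y:ℂ), ?_, ?_⟩
  · refine Subring.mul_mem _ (Subring.mul_mem _ ?_ (Subring.pow_mem _ hu E)) ?_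
    · exact Subring.pow_mem _ (Subring.sub_mem _ (Subring.subset_closure (Set.mem_singleton ξ))
        (Subring.one_mem _)) _
    · exact intCast_mem (Subring.closure ({ξ} : Set ℂ)) y
  · rw [hxc, hueq, mul_pow, ← pow_mul]
    have hpow : (ξ-1)^((r-1)*E) = (ξ-1)^N.toNat * (ξ-1)^((r-1)*E - N.toNat) := by
      rw [← pow_add]
      congr 1
      omega
    rw [hpow]
    ring
end

section
/- For every λ ∈ X one has ∑_{μ ∈ R} ∑_{w,w' ∈ W} det(w)·det(w')·ζ^{D(B(μ,μ) − B(ρ,ρ)) + 2D·B(μ, w·λ + w'·ρ)} = |W| · γ · ζ^{−D(B(λ,λ) + B(ρ,ρ))} · ∑_{w ∈ W} det(w)·ζ^{−2D·B(λ, w·ρ)}, where all exponents are integers and the left-hand side is independent of the choice of R. -/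
/-- Determinant of a linear automorphism of `ℚ^l`. -/
noncomputable def lDet {l : ℕ} (w : (Fin l → ℚ) ≃ₗ[ℚ] (Fin l → ℚ)) : ℚ :=
  LinearMap.det (w : (Fin l → ℚ) →ₗ[ℚ] (Fin l → ℚ))

lemma lDet_mul {l : ℕ} (e₁ e₂ : (Fin l → ℚ) ≃ₗ[ℚ] (Fin l → ℚ)) :
    lDet (e₁ * e₂) = lDet e₁ * lDet e₂ := by
  have : ((e₁ * e₂ : (Fin l → ℚ) ≃ₗ[ℚ] (Fin l → ℚ)) : (Fin l → ℚ) →ₗ[ℚ] (Fin l → ℚ))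
      = ((e₁ : (Fin l → ℚ) →ₗ[ℚ] (Fin l → ℚ))).comp
        (e₂ : (Fin l → ℚ) →ₗ[ℚ] (Fin l → ℚ)) := rfl
  rw [lDet, lDet, lDet, this, LinearMap.det_comp]

lemma lDet_one {l : ℕ} : lDet (1 : (Fin l → ℚ) ≃ₗ[ℚ] (Fin l → ℚ)) = 1 := by
  have : ((1 : (Fin l → ℚ) ≃ₗ[ℚ] (Fin l → ℚ)) : (Fin l → ℚ) →ₗ[ℚ] (Fin l → ℚ))
      = LinearMap.id := rfl
  rw [lDet, this, LinearMap.det_id]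

lemma zpow_periodic (ζ : ℂ) (N : ℕ) (hN : N ≠ 0) (hζ : ζ ^ N = 1) (a b : ℤ)
    (h : (N : ℤ) ∣ a - b) : ζ ^ a = ζ ^ b := by
  have hζ0 : ζ ≠ 0 := by
    intro h0; rw [h0, zero_pow hN] at hζ; exact one_ne_zero hζ.symm
  obtain ⟨k, hk⟩ := h
  have ha : a = b + (N : ℤ) * k := by linarith
  rw [ha, zpow_add₀ hζ0, zpow_mul, zpow_natCast, hζ, one_zpow, mul_one]

/-- the Kirby-move computation: for every `λ ∈ X`,
`∑_{μ ∈ R} ∑_{w,w'} det(w)det(w')·ζ^{D(B(μ,μ)−B(ρ,ρ)) + 2D·B(μ, w·λ + w'·ρ)}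
 = |W|·γ·ζ^{−D(B(λ,λ)+B(ρ,ρ))}·∑_w det(w)·ζ^{−2D·B(λ,w·ρ)}`,
the left-hand side being independent of the choice of representatives `R` of `X/rY`. -/
theorem stmt13 (l D r : ℕ) (hl : 0 < l) (hD : 0 < D) (hr : 0 < r)
    (X : AddSubgroup (Fin l → ℚ)) (hYX : ∀ y : Fin l → ℤ, intVecQ y ∈ X)
    (B : (Fin l → ℚ) →ₗ[ℚ] (Fin l → ℚ) →ₗ[ℚ] ℚ)
    (hBsymm : ∀ x y, B x y = B y x)
    (hBint : ∀ x ∈ X, ∀ y : Fin l → ℤ, ∃ n : ℤ, (n : ℚ) = B x (intVecQ y))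
    (hBeven : ∀ y : Fin l → ℤ, ∃ n : ℤ, ((2 * n : ℤ) : ℚ) = B (intVecQ y) (intVecQ y))
    (hBD : ∀ x ∈ X, ∀ x' ∈ X, ∃ n : ℤ, (n : ℚ) = (D : ℚ) * B x x')
    (ρ : Fin l → ℚ) (hρX : ρ ∈ X)
    (ζ : ℂ) (hζ : ζ ^ (2 * D * r) = 1)
    (W : Subgroup ((Fin l → ℚ) ≃ₗ[ℚ] (Fin l → ℚ))) [Fintype W]
    (hWX : ∀ (w : W), ∀ x ∈ X, ((w : (Fin l → ℚ) ≃ₗ[ℚ] (Fin l → ℚ)) x) ∈ X)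
    (hWY : ∀ (w : W) (y : Fin l → ℤ), ∃ z : Fin l → ℤ,
      (w : (Fin l → ℚ) ≃ₗ[ℚ] (Fin l → ℚ)) (intVecQ y) = intVecQ z)
    (hWB : ∀ (w : W) (x y : Fin l → ℚ),
      B ((w : (Fin l → ℚ) ≃ₗ[ℚ] (Fin l → ℚ)) x) ((w : (Fin l → ℚ) ≃ₗ[ℚ] (Fin l → ℚ)) y)
        = B x y)
    (R R' : Finset (Fin l → ℚ))
    (hRX : ∀ μ ∈ R, μ ∈ X)
    (hRrep : ∀ x ∈ X, ∃! μ, μ ∈ R ∧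
      ∃ y : Fin l → ℤ, x - μ = fun i => (r : ℚ) * (y i : ℚ))
    (hR'X : ∀ μ ∈ R', μ ∈ X)
    (hR'rep : ∀ x ∈ X, ∃! μ, μ ∈ R' ∧
      ∃ y : Fin l → ℤ, x - μ = fun i => (r : ℚ) * (y i : ℚ))
    (lam : Fin l → ℚ) (hlam : lam ∈ X)
    (E E' : (Fin l → ℚ) → W → W → ℤ)
    (hE : ∀ μ ∈ R, ∀ (w w' : W),
      ((E μ w w' : ℤ) : ℚ) = (D : ℚ) * (B μ μ - B ρ ρ) +
        2 * (D : ℚ) * B μ ((w : (Fin l → ℚ) ≃ₗ[ℚ] (Fin l → ℚ)) lam +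
          (w' : (Fin l → ℚ) ≃ₗ[ℚ] (Fin l → ℚ)) ρ))
    (hE' : ∀ μ ∈ R', ∀ (w w' : W),
      ((E' μ w w' : ℤ) : ℚ) = (D : ℚ) * (B μ μ - B ρ ρ) +
        2 * (D : ℚ) * B μ ((w : (Fin l → ℚ) ≃ₗ[ℚ] (Fin l → ℚ)) lam +
          (w' : (Fin l → ℚ) ≃ₗ[ℚ] (Fin l → ℚ)) ρ))
    (g : (Fin l → ℚ) → ℤ)
    (hg : ∀ μ ∈ R, ((g μ : ℤ) : ℚ) = (D : ℚ) * (B μ μ - B ρ ρ))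
    (cb : ℤ) (hcb : ((cb : ℤ) : ℚ) = (D : ℚ) * (B lam lam + B ρ ρ))
    (cw : W → ℤ)
    (hcw : ∀ w : W, ((cw w : ℤ) : ℚ) =
      2 * (D : ℚ) * B lam ((w : (Fin l → ℚ) ≃ₗ[ℚ] (Fin l → ℚ)) ρ)) :
    (∑ μ ∈ R, ∑ w : W, ∑ w' : W,
        ((lDet (w : (Fin l → ℚ) ≃ₗ[ℚ] (Fin l → ℚ)) *
            lDet (w' : (Fin l → ℚ) ≃ₗ[ℚ] (Fin l → ℚ)) : ℚ) : ℂ) * ζ ^ (E μ w w')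
      = (Fintype.card W : ℂ) * (∑ μ ∈ R, ζ ^ (g μ)) * ζ ^ (-cb) *
          ∑ w : W, ((lDet (w : (Fin l → ℚ) ≃ₗ[ℚ] (Fin l → ℚ)) : ℚ) : ℂ) *
            ζ ^ (-(cw w))) ∧
    ∑ μ ∈ R, ∑ w : W, ∑ w' : W,
        ((lDet (w : (Fin l → ℚ) ≃ₗ[ℚ] (Fin l → ℚ)) *
            lDet (w' : (Fin l → ℚ) ≃ₗ[ℚ] (Fin l → ℚ)) : ℚ) : ℂ) * ζ ^ (E μ w w')
      = ∑ μ ∈ R', ∑ w : W, ∑ w' : W,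
          ((lDet (w : (Fin l → ℚ) ≃ₗ[ℚ] (Fin l → ℚ)) *
              lDet (w' : (Fin l → ℚ) ≃ₗ[ℚ] (Fin l → ℚ)) : ℚ) : ℂ) * ζ ^ (E' μ w w') := by
  classical
  have hζ0 : ζ ≠ 0 := by
    intro h0
    rw [h0, zero_pow (by positivity : 2 * D * r ≠ 0)] at hζ
    exact one_ne_zero hζ.symm
  have hper : ∀ a b : ℤ, ((2 * D * r : ℕ) : ℤ) ∣ a - b → ζ ^ a = ζ ^ b :=
    zpow_periodic ζ (2 * D * r) (by positivity) hζ
  -- the determinant character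
  have φmul : ∀ w u : W,
      lDet ((w * u : W) : (Fin l → ℚ) ≃ₗ[ℚ] (Fin l → ℚ))
        = lDet (w : (Fin l → ℚ) ≃ₗ[ℚ] (Fin l → ℚ)) *
          lDet (u : (Fin l → ℚ) ≃ₗ[ℚ] (Fin l → ℚ)) := by
    intro w u
    have : ((w * u : W) : (Fin l → ℚ) ≃ₗ[ℚ] (Fin l → ℚ))
        = (w : (Fin l → ℚ) ≃ₗ[ℚ] (Fin l → ℚ)) * (u : (Fin l → ℚ) ≃ₗ[ℚ] (Fin l → ℚ)) := rfl
    rw [this, lDet_mul]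
  have hdet2 : ∀ w : W,
      lDet (w : (Fin l → ℚ) ≃ₗ[ℚ] (Fin l → ℚ)) *
        lDet (w : (Fin l → ℚ) ≃ₗ[ℚ] (Fin l → ℚ)) = 1 := by
    intro w
    set φ : W →* ℚ :=
      { toFun := fun w => lDet (w : (Fin l → ℚ) ≃ₗ[ℚ] (Fin l → ℚ))
        map_one' := lDet_one
        map_mul' := φmul } with hφ
    have hpow : (lDet (w : (Fin l → ℚ) ≃ₗ[ℚ] (Fin l → ℚ))) ^ (Fintype.card W) = 1 := by
      have hc : w ^ Fintype.card W = 1 := pow_card_eq_one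
      have := congrArg φ hc
      rwa [map_pow, map_one] at this
    rcases pow_eq_one_iff_cases.mp hpow with h | h | h
    · have := Fintype.card_pos (α := W); omega
    · rw [h]; norm_num
    · rw [h.1]; norm_num
  -- the squared-norm exponent function
  have hDBx : ∀ x ∈ X, ∃ n : ℤ, (n : ℚ) = (D : ℚ) * (B x x - B ρ ρ) := by
    intro x hx
    obtain ⟨n1, h1⟩ := hBD x hx x hx
    obtain ⟨n2, h2⟩ := hBD ρ hρX ρ hρX
    exact ⟨n1 - n2, by push_cast; rw [h1, h2]; ring⟩
  set nF : (Fin l → ℚ) → ℤ := fun x =>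
    if h : ∃ n : ℤ, (n : ℚ) = (D : ℚ) * (B x x - B ρ ρ) then h.choose else 0 with hnFdef
  have hnF : ∀ x ∈ X, ((nF x : ℤ) : ℚ) = (D : ℚ) * (B x x - B ρ ρ) := by
    intro x hx
    have h := hDBx x hx
    simp only [hnFdef, dif_pos h]
    exact h.choose_spec
  -- scaled integer vectors
  have hrvX : ∀ y : Fin l → ℤ, (fun i => (r : ℚ) * (y i : ℚ)) ∈ X := by
    intro y
    have : (fun i => (r : ℚ) * (y i : ℚ)) = intVecQ (fun i => (r : ℤ) * y i) := by
      funext i; simp [intVecQ]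
    rw [this]; exact hYX _
  have hrv_smul : ∀ y : Fin l → ℤ,
      (fun i => (r : ℚ) * (y i : ℚ)) = (r : ℚ) • intVecQ y := by
    intro y; funext i; simp [intVecQ]
  -- invariance of ζ^{nF} under translation by r·(integer vector)
  have hinv : ∀ x ∈ X, ∀ y : Fin l → ℤ,
      ζ ^ (nF (x + fun i => (r : ℚ) * (y i : ℚ))) = ζ ^ (nF x) := by
    intro x hx y
    have hx' : (x + fun i => (r : ℚ) * (y i : ℚ)) ∈ X := X.add_mem hx (hrvX y)
    obtain ⟨m, hm⟩ := hBint x hx y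
    obtain ⟨k, hk⟩ := hBeven y
    apply hper
    refine ⟨m + (r : ℤ) * k, ?_⟩
    have e1 := hnF _ hx'
    have e2 := hnF x hx
    have hB1 : B (x + fun i => (r : ℚ) * (y i : ℚ)) (x + fun i => (r : ℚ) * (y i : ℚ))
        = B x x + 2 * ((r : ℚ) * B x (intVecQ y))
          + (r : ℚ) * (r : ℚ) * B (intVecQ y) (intVecQ y) := by
      rw [hrv_smul y]
      simp only [map_add, map_smul, LinearMap.add_apply, LinearMap.smul_apply, smul_eq_mul]
      rw [hBsymm (intVecQ y) x]
      ring
    have : ((nF (x + fun i => (r : ℚ) * (y i : ℚ)) - nF x : ℤ) : ℚ)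
        = (((2 * D * r : ℕ) : ℤ) * (m + (r : ℤ) * k) : ℤ) := by
      push_cast
      rw [e1, e2, hB1, ← hm, ← hk]
      push_cast
      ring
    exact_mod_cast this
  -- the transversal lemma
  have key : ∀ (S : Finset (Fin l → ℚ)), (∀ μ ∈ S, μ ∈ X) →
      (∀ x ∈ X, ∃! μ, μ ∈ S ∧ ∃ y : Fin l → ℤ, x - μ = fun i => (r : ℚ) * (y i : ℚ)) →
      ∀ (T : Finset (Fin l → ℚ)), (∀ μ ∈ T, μ ∈ X) →
      (∀ x ∈ X, ∃! μ, μ ∈ T ∧ ∃ y : Fin l → ℤ, x - μ = fun i => (r : ℚ) * (y i : ℚ)) →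
      ∀ t ∈ X, ∑ μ ∈ S, ζ ^ (nF (μ + t)) = ∑ μ ∈ T, ζ ^ (nF μ) := by
    intro S hSX hSrep T hTX hTrep t ht
    refine Finset.sum_bij
      (fun μ hμ => (hTrep (μ + t) (X.add_mem (hSX μ hμ) ht)).choose) ?_ ?_ ?_ ?_
    · intro μ hμ
      exact (hTrep (μ + t) (X.add_mem (hSX μ hμ) ht)).choose_spec.1.1
    · intro μ₁ hμ₁ μ₂ hμ₂ heq
      obtain ⟨y₁, hy₁⟩ := (hTrep (μ₁ + t) (X.add_mem (hSX μ₁ hμ₁) ht)).choose_spec.1.2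
      obtain ⟨y₂, hy₂⟩ := (hTrep (μ₂ + t) (X.add_mem (hSX μ₂ hμ₂) ht)).choose_spec.1.2
      have heq' : (hTrep (μ₁ + t) (X.add_mem (hSX μ₁ hμ₁) ht)).choose
          = (hTrep (μ₂ + t) (X.add_mem (hSX μ₂ hμ₂) ht)).choose := heq
      rw [heq'] at hy₁
      have hdiff : μ₁ - μ₂ = fun i => (r : ℚ) * ((y₁ i - y₂ i : ℤ) : ℚ) := by
        funext i
        have h1 := congrFun hy₁ i
        have h2 := congrFun hy₂ i
        simp only [Pi.sub_apply, Pi.add_apply] at h1 h2 ⊢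
        push_cast
        linarith
      exact (hSrep μ₁ (hSX μ₁ hμ₁)).unique
        ⟨hμ₁, 0, by funext i; simp⟩
        ⟨hμ₂, fun i => y₁ i - y₂ i, hdiff⟩
    · intro c hc
      have hcX := hTX c hc
      obtain ⟨hμS, y, hy⟩ := (hSrep (c - t) (X.sub_mem hcX ht)).choose_spec.1
      set μ := (hSrep (c - t) (X.sub_mem hcX ht)).choose with hμ
      refine ⟨μ, hμS, ?_⟩
      have : (μ + t) - c = fun i => (r : ℚ) * ((-(y i) : ℤ) : ℚ) := by
        funext i
        have h1 := congrFun hy i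
        simp only [Pi.sub_apply, Pi.add_apply] at h1 ⊢
        push_cast
        linarith
      exact ((hTrep (μ + t) (X.add_mem (hSX μ hμS) ht)).choose_spec.2 c
        ⟨hc, fun i => -(y i), this⟩).symm
    · intro μ hμ
      obtain ⟨y, hy⟩ := (hTrep (μ + t) (X.add_mem (hSX μ hμ) ht)).choose_spec.1.2
      set c := (hTrep (μ + t) (X.add_mem (hSX μ hμ) ht)).choose with hc
      have hcX := hTX c (hTrep (μ + t) (X.add_mem (hSX μ hμ) ht)).choose_spec.1.1
      have heq : μ + t = c + fun i => (r : ℚ) * (y i : ℚ) := by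
        funext i
        have h1 := congrFun hy i
        simp only [Pi.sub_apply, Pi.add_apply] at h1 ⊢
        linarith
      rw [heq, hinv c hcX y]
  -- the exponent identity
  have hEid : ∀ (S : Finset (Fin l → ℚ)) (ES : (Fin l → ℚ) → W → W → ℤ),
      (∀ μ ∈ S, μ ∈ X) →
      (∀ μ ∈ S, ∀ (w w' : W),
        ((ES μ w w' : ℤ) : ℚ) = (D : ℚ) * (B μ μ - B ρ ρ) +
          2 * (D : ℚ) * B μ ((w : (Fin l → ℚ) ≃ₗ[ℚ] (Fin l → ℚ)) lam +
            (w' : (Fin l → ℚ) ≃ₗ[ℚ] (Fin l → ℚ)) ρ)) →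
      ∀ μ ∈ S, ∀ w w' : W,
        ES μ w w' = nF (μ + ((w : (Fin l → ℚ) ≃ₗ[ℚ] (Fin l → ℚ)) lam +
          (w' : (Fin l → ℚ) ≃ₗ[ℚ] (Fin l → ℚ)) ρ)) - cb - cw (w⁻¹ * w') := by
    intro S ES hSX hES μ hμ w w'
    have hμX := hSX μ hμ
    have hνX : ((w : (Fin l → ℚ) ≃ₗ[ℚ] (Fin l → ℚ)) lam +
        (w' : (Fin l → ℚ) ≃ₗ[ℚ] (Fin l → ℚ)) ρ) ∈ X :=
      X.add_mem (hWX w lam hlam) (hWX w' ρ hρX)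
    have h1 := hES μ hμ w w'
    have h2 := hnF _ (X.add_mem hμX hνX)
    have h3 := hcw (w⁻¹ * w')
    have hmulapply : ((w⁻¹ * w' : W) : (Fin l → ℚ) ≃ₗ[ℚ] (Fin l → ℚ)) ρ
        = ((w : (Fin l → ℚ) ≃ₗ[ℚ] (Fin l → ℚ))).symm
          ((w' : (Fin l → ℚ) ≃ₗ[ℚ] (Fin l → ℚ)) ρ) := rfl
    rw [hmulapply] at h3
    have hcross : B ((w : (Fin l → ℚ) ≃ₗ[ℚ] (Fin l → ℚ)) lam)
        ((w' : (Fin l → ℚ) ≃ₗ[ℚ] (Fin l → ℚ)) ρ)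
        = B lam (((w : (Fin l → ℚ) ≃ₗ[ℚ] (Fin l → ℚ))).symm
          ((w' : (Fin l → ℚ) ≃ₗ[ℚ] (Fin l → ℚ)) ρ)) := by
      conv_lhs => rw [← LinearEquiv.apply_symm_apply
        (w : (Fin l → ℚ) ≃ₗ[ℚ] (Fin l → ℚ))
        ((w' : (Fin l → ℚ) ≃ₗ[ℚ] (Fin l → ℚ)) ρ)]
      exact hWB w lam _
    have hsq : ∀ a b : Fin l → ℚ, B (a + b) (a + b) = B a a + 2 * B a b + B b b := by
      intro a b
      simp only [map_add, LinearMap.add_apply]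
      rw [hBsymm b a]
      ring
    have hcast : ((ES μ w w' : ℤ) : ℚ)
        = ((nF (μ + ((w : (Fin l → ℚ) ≃ₗ[ℚ] (Fin l → ℚ)) lam +
            (w' : (Fin l → ℚ) ≃ₗ[ℚ] (Fin l → ℚ)) ρ)) - cb - cw (w⁻¹ * w') : ℤ) : ℚ) := by
      push_cast
      rw [h1, h2, h3, hcb, hsq μ _, hsq ((w : (Fin l → ℚ) ≃ₗ[ℚ] (Fin l → ℚ)) lam) _,
        hWB w lam lam, hWB w' ρ ρ, hcross]
      ring
    exact_mod_cast hcast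
  -- the main normal form
  have main : ∀ (S : Finset (Fin l → ℚ)) (ES : (Fin l → ℚ) → W → W → ℤ),
      (∀ μ ∈ S, μ ∈ X) →
      (∀ x ∈ X, ∃! μ, μ ∈ S ∧ ∃ y : Fin l → ℤ, x - μ = fun i => (r : ℚ) * (y i : ℚ)) →
      (∀ μ ∈ S, ∀ (w w' : W),
        ((ES μ w w' : ℤ) : ℚ) = (D : ℚ) * (B μ μ - B ρ ρ) +
          2 * (D : ℚ) * B μ ((w : (Fin l → ℚ) ≃ₗ[ℚ] (Fin l → ℚ)) lam +
            (w' : (Fin l → ℚ) ≃ₗ[ℚ] (Fin l → ℚ)) ρ)) →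
      ∑ μ ∈ S, ∑ w : W, ∑ w' : W,
        ((lDet (w : (Fin l → ℚ) ≃ₗ[ℚ] (Fin l → ℚ)) *
            lDet (w' : (Fin l → ℚ) ≃ₗ[ℚ] (Fin l → ℚ)) : ℚ) : ℂ) * ζ ^ (ES μ w w')
      = (∑ μ ∈ R, ζ ^ (nF μ)) * ∑ w : W, ∑ w' : W,
          ((lDet (w : (Fin l → ℚ) ≃ₗ[ℚ] (Fin l → ℚ)) *
              lDet (w' : (Fin l → ℚ) ≃ₗ[ℚ] (Fin l → ℚ)) : ℚ) : ℂ) *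
            ζ ^ (-cb - cw (w⁻¹ * w')) := by
    intro S ES hSX hSrep hES
    rw [Finset.sum_comm]
    rw [Finset.sum_congr rfl fun w _ => Finset.sum_comm]
    rw [Finset.mul_sum]
    refine Finset.sum_congr rfl fun w _ => ?_
    rw [Finset.mul_sum]
    refine Finset.sum_congr rfl fun w' _ => ?_
    have hνX : ((w : (Fin l → ℚ) ≃ₗ[ℚ] (Fin l → ℚ)) lam +
        (w' : (Fin l → ℚ) ≃ₗ[ℚ] (Fin l → ℚ)) ρ) ∈ X :=
      X.add_mem (hWX w lam hlam) (hWX w' ρ hρX)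
    have step : ∀ μ ∈ S,
        ((lDet (w : (Fin l → ℚ) ≃ₗ[ℚ] (Fin l → ℚ)) *
            lDet (w' : (Fin l → ℚ) ≃ₗ[ℚ] (Fin l → ℚ)) : ℚ) : ℂ) * ζ ^ (ES μ w w')
        = ((lDet (w : (Fin l → ℚ) ≃ₗ[ℚ] (Fin l → ℚ)) *
            lDet (w' : (Fin l → ℚ) ≃ₗ[ℚ] (Fin l → ℚ)) : ℚ) : ℂ) *
          ζ ^ (-cb - cw (w⁻¹ * w')) *
          ζ ^ (nF (μ + ((w : (Fin l → ℚ) ≃ₗ[ℚ] (Fin l → ℚ)) lam +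
            (w' : (Fin l → ℚ) ≃ₗ[ℚ] (Fin l → ℚ)) ρ))) := by
      intro μ hμ
      rw [hEid S ES hSX hES μ hμ w w']
      rw [show nF (μ + ((w : (Fin l → ℚ) ≃ₗ[ℚ] (Fin l → ℚ)) lam +
          (w' : (Fin l → ℚ) ≃ₗ[ℚ] (Fin l → ℚ)) ρ)) - cb - cw (w⁻¹ * w')
          = (-cb - cw (w⁻¹ * w')) + nF (μ + ((w : (Fin l → ℚ) ≃ₗ[ℚ] (Fin l → ℚ)) lam +
            (w' : (Fin l → ℚ) ≃ₗ[ℚ] (Fin l → ℚ)) ρ)) by ring]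
      rw [zpow_add₀ hζ0]
      ring
    rw [Finset.sum_congr rfl step, ← Finset.mul_sum,
      key S hSX hSrep R hRX hRrep _ hνX]
    ring
  -- apply to R and R'
  have mainR := main R E hRX hRrep hE
  have mainR' := main R' E' hR'X hR'rep hE'
  have hΓ : (∑ μ ∈ R, ζ ^ (nF μ)) = ∑ μ ∈ R, ζ ^ (g μ) := by
    refine Finset.sum_congr rfl fun μ hμ => ?_
    have : nF μ = g μ := by
      have h1 := hnF μ (hRX μ hμ)
      have h2 := hg μ hμ
      exact_mod_cast h1.trans h2.symm
    rw [this]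
  constructor
  · rw [mainR, hΓ]
    -- now compute the Weyl-group double sum
    have hsum : ∑ w : W, ∑ w' : W,
        ((lDet (w : (Fin l → ℚ) ≃ₗ[ℚ] (Fin l → ℚ)) *
            lDet (w' : (Fin l → ℚ) ≃ₗ[ℚ] (Fin l → ℚ)) : ℚ) : ℂ) *
          ζ ^ (-cb - cw (w⁻¹ * w'))
        = (Fintype.card W : ℂ) * (ζ ^ (-cb) *
            ∑ u : W, ((lDet (u : (Fin l → ℚ) ≃ₗ[ℚ] (Fin l → ℚ)) : ℚ) : ℂ) *
              ζ ^ (-(cw u))) := by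
      have hinner : ∀ w : W, ∑ w' : W,
          ((lDet (w : (Fin l → ℚ) ≃ₗ[ℚ] (Fin l → ℚ)) *
              lDet (w' : (Fin l → ℚ) ≃ₗ[ℚ] (Fin l → ℚ)) : ℚ) : ℂ) *
            ζ ^ (-cb - cw (w⁻¹ * w'))
          = ζ ^ (-cb) * ∑ u : W,
              ((lDet (u : (Fin l → ℚ) ≃ₗ[ℚ] (Fin l → ℚ)) : ℚ) : ℂ) * ζ ^ (-(cw u)) := by
        intro w
        rw [Finset.mul_sum]
        refine (Fintype.sum_equiv (Equiv.mulLeft w) _ _ fun u => ?_).symm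
        have h0 : (Equiv.mulLeft w) u = w * u := rfl
        rw [h0]
        have h1 : w⁻¹ * (w * u) = u := inv_mul_cancel_left w u
        rw [h1, φmul w u]
        have hd : ((lDet (w : (Fin l → ℚ) ≃ₗ[ℚ] (Fin l → ℚ)) *
            (lDet (w : (Fin l → ℚ) ≃ₗ[ℚ] (Fin l → ℚ)) *
              lDet (u : (Fin l → ℚ) ≃ₗ[ℚ] (Fin l → ℚ))) : ℚ) : ℂ)
            = ((lDet (u : (Fin l → ℚ) ≃ₗ[ℚ] (Fin l → ℚ)) : ℚ) : ℂ) := by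
          norm_cast
          rw [← mul_assoc, hdet2 w, one_mul]
        rw [show (-cb - cw u : ℤ) = (-cb) + (-(cw u)) by ring, zpow_add₀ hζ0, hd]
        ring
      rw [Finset.sum_congr rfl fun w _ => hinner w, Finset.sum_const, Finset.card_univ,
        nsmul_eq_mul]
    rw [hsum]
    ring
  · rw [mainR, mainR']
end
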